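/- Let n ≥ 2, d ≥ 0, and ρ > 0. Then there exists k₀ > 0 (one may take k₀ = (4 + 2 min(d-2,0))/(1 + 2n/ρ)) such that for all 0 ≤ k ≤ k₀, the function U(x,t) = (ρ + kt + |x|²)^{d/2} satisfies ∂ₜU - ∂ₜΔU ≤ ΔU on ℝⁿ × (0,∞). -/

import Mathlib

/-!
With `Σ = ρ + k t + ‖x‖²`, the function `U = Σ^(d/2)` depends on `(x, t)` only through `Σ`, and a
direct computation gives `ΔU - ∂ₜU + ∂ₜΔU = (d/2) Σ^(d/2-3) B`, where `B` is a polynomial in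
`k`, `r = ‖x‖²` and `Σ` (`heatBracket`). Since `ρ + r ≤ Σ`, the bracket is nonnegative once
`k (ρ + 2n) ≤ (4 + 2 min(d-2, 0)) ρ`: for `d ≥ 2` this only uses `k ≤ 4 ≤ 2n`, while for `d < 2`
the negative terms are absorbed after multiplying `B` by `ρ ≤ Σ`.
-/

/-- The Laplacian of a real-valued function on `EuclideanSpace ℝ (Fin n)`,
as the sum of second partial derivatives in the coordinate directions. -/
noncomputable def lap {n : ℕ} (f : EuclideanSpace ℝ (Fin n) → ℝ)
    (x : EuclideanSpace ℝ (Fin n)) : ℝ :=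
  ∑ i : Fin n, fderiv ℝ (fun y => fderiv ℝ f y (EuclideanSpace.single i 1)) x
    (EuclideanSpace.single i 1)

open Real
open scoped RealInnerProductSpace

section InnerProductSpace

variable {E : Type*} [NormedAddCommGroup E] [InnerProductSpace ℝ E] {a : ℝ}

theorem hasFDerivAt_rpow_const_add_norm_sq (ha : 0 < a) (p : ℝ) (x : E) :
    HasFDerivAt (fun y : E => (a + ‖y‖ ^ 2) ^ p)
      ((p * (a + ‖x‖ ^ 2) ^ (p - 1)) • (2 • innerSL ℝ x)) x :=
  (hasDerivAt_rpow_const (Or.inl (by positivity))).comp_hasFDerivAt x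
    ((hasStrictFDerivAt_norm_sq x).hasFDerivAt.const_add a)

theorem fderiv_rpow_const_add_norm_sq_apply (ha : 0 < a) (p : ℝ) (x v : E) :
    fderiv ℝ (fun y : E => (a + ‖y‖ ^ 2) ^ p) x v
      = 2 * p * (a + ‖x‖ ^ 2) ^ (p - 1) * ⟪x, v⟫ := by
  simp only [(hasFDerivAt_rpow_const_add_norm_sq ha p x).fderiv, smul_apply, coe_innerSL_apply,
    nsmul_eq_mul, Nat.cast_ofNat, smul_eq_mul]
  ring

theorem fderiv_fderiv_rpow_const_add_norm_sq_apply (ha : 0 < a) (p : ℝ) (x v : E) :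
    fderiv ℝ (fun y : E => fderiv ℝ (fun y : E => (a + ‖y‖ ^ 2) ^ p) y v) x v
      = 4 * p * (p - 1) * (a + ‖x‖ ^ 2) ^ (p - 2) * ⟪x, v⟫ ^ 2
        + 2 * p * (a + ‖x‖ ^ 2) ^ (p - 1) * ‖v‖ ^ 2 := by
  simp_rw [fderiv_rpow_const_add_norm_sq_apply ha]
  have h : HasFDerivAt (fun y : E => 2 * p * (a + ‖y‖ ^ 2) ^ (p - 1) * ⟪y, v⟫) _ x :=
    ((hasFDerivAt_rpow_const_add_norm_sq ha (p - 1) x).const_mul (2 * p)).mul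
    (((hasFDerivAt_id x).inner ℝ (hasFDerivAt_const v x)))
  rw [h.fderiv]
  simp only [show p - 1 - 1 = p - 2 by ring, add_apply, smul_apply, ContinuousLinearMap.comp_apply,
    ContinuousLinearMap.prod_apply, ContinuousLinearMap.id_apply, zero_apply, fderivInnerCLM_apply,
    inner_zero_right, real_inner_self_eq_norm_sq, zero_add, smul_eq_mul, coe_innerSL_apply,
    nsmul_eq_mul, Nat.cast_ofNat, id_eq]
  ring

end InnerProductSpace

theorem lap_rpow_const_add_norm_sq {n : ℕ} {a : ℝ} (ha : 0 < a) (p : ℝ)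
    (x : EuclideanSpace ℝ (Fin n)) :
    lap (fun y => (a + ‖y‖ ^ 2) ^ p) x
      = 4 * p * (p - 1) * (a + ‖x‖ ^ 2) ^ (p - 2) * ‖x‖ ^ 2
        + 2 * p * n * (a + ‖x‖ ^ 2) ^ (p - 1) := by
  simp only [lap, fderiv_fderiv_rpow_const_add_norm_sq_apply ha, EuclideanSpace.inner_single_right,
    PiLp.norm_single]
  simp only [EuclideanSpace.real_norm_sq_eq, ringHom_apply, one_mul, norm_one, one_pow, mul_one,
    Finset.sum_add_distrib, ← Finset.mul_sum, Finset.sum_const, Finset.card_univ, Fintype.card_fin,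
    nsmul_eq_mul]
  ring

/-- `Σ²` times the bracket in `ΔU - ∂ₜU + ∂ₜΔU = (d/2) Σ^(d/2-1) [...]`, for `r = ‖x‖²`, `S = Σ`. -/
def heatBracket (N d k r S : ℝ) : ℝ :=
  2 * (d - 2) * S * r + 2 * N * S ^ 2 + k * ((d - 2) * (d - 4) * r + N * (d - 2) * S) - k * S ^ 2

theorem heatBracket_nonneg {N d k ρ r S : ℝ} (hN : 2 ≤ N) (hρ : 0 < ρ) (hk : 0 ≤ k)
    (hr : 0 ≤ r) (hS : ρ + r ≤ S) (hk₀ : k * (ρ + 2 * N) ≤ (4 + 2 * min (d - 2) 0) * ρ) :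
    0 ≤ heatBracket N d k r S := by
  unfold heatBracket
  have hρS : ρ ≤ S := by linarith
  have hrS : r ≤ S := by linarith
  rcases le_total d 2 with hd | hd
  · rw [min_eq_left (by linarith)] at hk₀
    have hd0 : 0 ≤ d := by nlinarith
    have h1 : 2 * (d - 2) * S * S ≤ 2 * (d - 2) * S * r := by
      nlinarith [mul_nonneg (mul_nonneg (sub_nonneg.2 hd) (hρ.le.trans hρS)) (sub_nonneg.2 hrS)]
    have h2 : 0 ≤ k * ((d - 2) * (d - 4)) * r :=
      mul_nonneg (mul_nonneg hk (by nlinarith)) hr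
    have h3 : k * N * (d - 2) * S * S ≤ k * N * (d - 2) * S * ρ := by
      nlinarith [mul_nonneg (mul_nonneg (mul_nonneg (mul_nonneg hk (by linarith : (0:ℝ) ≤ N))
        (sub_nonneg.2 hd)) (hρ.le.trans hρS)) (sub_nonneg.2 hρS)]
    have h4 : 0 ≤ ((2 * N - 4) * ρ + k * N * d) * S ^ 2 := by
      have : 0 ≤ k * N * d := mul_nonneg (mul_nonneg hk (by linarith)) hd0
      exact mul_nonneg (by nlinarith) (sq_nonneg S)
    refine nonneg_of_mul_nonneg_right (a := ρ) ?_ hρ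
    nlinarith [mul_le_mul_of_nonneg_right hk₀ (sq_nonneg S)]
  · rw [min_eq_right (by linarith)] at hk₀
    have hk4 : k ≤ 4 := by nlinarith
    have h1 : 0 ≤ (d - 4) * r + N * S := by nlinarith
    have h2 : 0 ≤ k * (d - 2) * ((d - 4) * r + N * S) :=
      mul_nonneg (mul_nonneg hk (by linarith)) h1
    have h3 : 0 ≤ 2 * (d - 2) * S * r :=
      mul_nonneg (mul_nonneg (by linarith) (by linarith)) hr
    nlinarith [mul_le_mul_of_nonneg_right (by linarith : k ≤ 2 * N) (sq_nonneg S)]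

theorem hasDerivAt_rpow_affine {b k c t : ℝ} (h : 0 < b + k * t + c) (q : ℝ) :
    HasDerivAt (fun s => (b + k * s + c) ^ q) (k * q * (b + k * t + c) ^ (q - 1)) t := by
  have hlin : HasDerivAt (fun s => b + k * s + c) k t := by
    simpa using ((hasDerivAt_id t).const_mul k |>.const_add b).add_const c
  exact hlin.rpow_const (Or.inl h.ne')

theorem deriv_lap_rpow_affine_add_norm_sq {n : ℕ} {b k t : ℝ} (h : 0 < b + k * t) (p : ℝ)
    (x : EuclideanSpace ℝ (Fin n)) :
    deriv (fun s => lap (fun y => (b + k * s + ‖y‖ ^ 2) ^ p) x) t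
      = k * (4 * p * (p - 1) * (p - 2) * (b + k * t + ‖x‖ ^ 2) ^ (p - 3) * ‖x‖ ^ 2
        + 2 * p * n * (p - 1) * (b + k * t + ‖x‖ ^ 2) ^ (p - 2)) := by
  have hpos : ∀ᶠ s in nhds t, 0 < b + k * s :=
    continuousAt_const.eventually_lt (by fun_prop : ContinuousAt (fun s => b + k * s) t) h
  have hlap : (fun s => lap (fun y => (b + k * s + ‖y‖ ^ 2) ^ p) x) =ᶠ[nhds t]
      fun s => 4 * p * (p - 1) * (b + k * s + ‖x‖ ^ 2) ^ (p - 2) * ‖x‖ ^ 2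
        + 2 * p * n * (b + k * s + ‖x‖ ^ 2) ^ (p - 1) :=
    hpos.mono fun s hs => lap_rpow_const_add_norm_sq hs p x
  have hS : 0 < b + k * t + ‖x‖ ^ 2 := by positivity
  have hD : HasDerivAt (fun s => 4 * p * (p - 1) * (b + k * s + ‖x‖ ^ 2) ^ (p - 2) * ‖x‖ ^ 2
      + 2 * p * n * (b + k * s + ‖x‖ ^ 2) ^ (p - 1)) _ t :=
    (((hasDerivAt_rpow_affine hS (p - 2)).const_mul _).mul_const _).add
      ((hasDerivAt_rpow_affine hS (p - 1)).const_mul _)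
  rw [hlap.deriv_eq, hD.deriv]
  rw [show p - 2 - 1 = p - 3 by ring, show p - 1 - 1 = p - 2 by ring]
  ring

theorem lap_sub_deriv_add_deriv_lap_rpow {n : ℕ} {ρ k t : ℝ} (h : 0 < ρ + k * t) (d : ℝ)
    (x : EuclideanSpace ℝ (Fin n)) :
    lap (fun y => (ρ + k * t + ‖y‖ ^ 2) ^ (d / 2)) x
        - deriv (fun s => (ρ + k * s + ‖x‖ ^ 2) ^ (d / 2)) t
        + deriv (fun s => lap (fun y => (ρ + k * s + ‖y‖ ^ 2) ^ (d / 2)) x) t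
      = d / 2 * (ρ + k * t + ‖x‖ ^ 2) ^ (d / 2 - 3)
          * heatBracket n d k (‖x‖ ^ 2) (ρ + k * t + ‖x‖ ^ 2) := by
  have hS : 0 < ρ + k * t + ‖x‖ ^ 2 := by positivity
  rw [lap_rpow_const_add_norm_sq h, (hasDerivAt_rpow_affine hS _).deriv,
    deriv_lap_rpow_affine_add_norm_sq h]
  set S := ρ + k * t + ‖x‖ ^ 2
  have h1 : S ^ (d / 2 - 1) = S ^ (d / 2 - 3) * S ^ 2 := by
    rw [← rpow_add_natCast hS.ne']; push_cast; ring_nf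
  have h2 : S ^ (d / 2 - 2) = S ^ (d / 2 - 3) * S := by
    rw [← rpow_add_one hS.ne']; ring_nf
  rw [h1, h2, heatBracket]
  ring

theorem stmt8 (n : ℕ) (hn : 2 ≤ n) (d ρ : ℝ) (hd : 0 ≤ d) (hρ : 0 < ρ) :
    ∃ k₀ > (0:ℝ), ∀ k : ℝ, 0 ≤ k → k ≤ k₀ →
      ∀ (x : EuclideanSpace ℝ (Fin n)) (t : ℝ), 0 < t →
        deriv (fun s => (ρ + k * s + ‖x‖ ^ (2:ℕ)) ^ (d/2)) t -
            deriv (fun s => lap (fun y => (ρ + k * s + ‖y‖ ^ (2:ℕ)) ^ (d/2)) x) t ≤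
          lap (fun y => (ρ + k * t + ‖y‖ ^ (2:ℕ)) ^ (d/2)) x := by
  rcases hd.eq_or_lt with rfl | hd
  -- for `d = 0` the formula for `k₀` gives `0`, but `U ≡ 1` and any `k₀` works
  · refine ⟨1, one_pos, fun k hk _ x t ht => ?_⟩
    have h := lap_sub_deriv_add_deriv_lap_rpow (by positivity : 0 < ρ + k * t) 0 x
    simp only [zero_div, zero_mul] at h
    linarith
  · have hN : (2 : ℝ) ≤ n := by exact_mod_cast hn
    have hm : -2 < min (d - 2) 0 := lt_min (by linarith) (by norm_num)
    refine ⟨(4 + 2 * min (d - 2) 0) * ρ / (ρ + 2 * n), by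
      apply div_pos (mul_pos (by linarith) hρ) (by linarith), fun k hk hk₀ x t ht => ?_⟩
    have hkt : 0 ≤ k * t := mul_nonneg hk ht.le
    have hB : 0 ≤ heatBracket n d k (‖x‖ ^ 2) (ρ + k * t + ‖x‖ ^ 2) :=
      heatBracket_nonneg hN hρ hk (by positivity) (by linarith)
        ((le_div_iff₀ (by linarith)).1 hk₀)
    have h := lap_sub_deriv_add_deriv_lap_rpow (by positivity : 0 < ρ + k * t) d x
    linarith [mul_nonneg (by positivity : 0 ≤ d / 2 * (ρ + k * t + ‖x‖ ^ 2) ^ (d / 2 - 3)) hB]
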